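/- arXiv:1809.01457 — 5 statements merged into one kernel-verified Lean document; each statement's English description precedes it below -/
import Mathlib

section
/- Let δ = γ/γ′ be a quotient of generalised power series γ = ∑_{α,β} c_{α,β} T^α U^β and γ′ = ∑_{α,β} c′_{α,β} T^α U^β (γ′ ≠ 0) with real coefficients that converge absolutely within a polyradius (r,s) ∈ (0,∞)^m × (0,∞)^n. For σ with 0 < σ_j ≤ s_j (j=1,…,n) define the partial evaluation coefficients e_α(σ) = ∑_β c_{α,β} σ^β and e′_α(σ) = ∑_β c′_{α,β} σ^β, and call σ admissible if e_α(σ) ≠ 0 for every α in the T-support of γ and e′_α(σ) ≠ 0 for every α in the T-support of γ′. Then for every admissible σ the partial evaluation δ(T,σ) = γ(T,σ)/γ′(T,σ) is a convergent generalised Puiseux series in T, and its order satisfies val(δ(T,σ)) = min{α : e_α(σ) ≠ 0} − min{α : e′_α(σ) ≠ 0} = min(T-supp γ) − min(T-supp γ′) (minima with respect to the lexicographic order on [0,∞)^m); in particular val(δ(T,σ)) does not depend on the choice of admissible σ. The analogous statement holds for partial evaluation of the T-variables. -/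
noncomputable section

/-- `A` is a family of subsets of `[0,∞)`, each meeting every interval `[0,R]` in a
finite set. -/
def GoodSupportFamily {k : ℕ} (A : Fin k → Set ℝ) : Prop :=
  ∀ i, A i ⊆ Set.Ici (0 : ℝ) ∧ ∀ R : ℝ, (A i ∩ Set.Icc 0 R).Finite

/-- The monomial `r^α = ∏ i, r i ^ α i` (real exponents). -/
def rmono {k : ℕ} (r : Fin k → ℝ) (α : Fin k → ℝ) : ℝ := ∏ i, r i ^ α i

/-- The `T`-support of a series `∑ c_{α,β} T^α U^β`. -/
def Tsupp {m n : ℕ} (c : (Fin m → ℝ) → (Fin n → ℝ) → ℝ) : Set (Fin m → ℝ) :=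
  {α | ∃ β, c α β ≠ 0}

/-- The coefficients of the partial evaluation `U ↦ σ`:  `e_α(σ) = ∑_β c_{α,β} σ^β`. -/
def pevalCoeff {m n : ℕ} (c : (Fin m → ℝ) → (Fin n → ℝ) → ℝ) (σ : Fin n → ℝ)
    (α : Fin m → ℝ) : ℝ :=
  ∑' β, c α β * rmono σ β

/-- Strict lexicographic order on exponent vectors in `[0,∞)^m`. -/
def lexLtF {m : ℕ} (a b : Fin m → ℝ) : Prop :=
  ∃ i, (∀ k, k < i → a k = b k) ∧ a i < b i

def lexLeF {m : ℕ} (a b : Fin m → ℝ) : Prop := a = b ∨ lexLtF a b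

/-- `a` is the lexicographic minimum of the set `S`. -/
def IsLexMin {m : ℕ} (S : Set (Fin m → ℝ)) (a : Fin m → ℝ) : Prop :=
  a ∈ S ∧ ∀ b ∈ S, lexLeF a b

lemma rmono_pos {k : ℕ} {r : Fin k → ℝ} (hr : ∀ i, 0 < r i) (α : Fin k → ℝ) :
    0 < rmono r α :=
  Finset.prod_pos fun i _ => Real.rpow_pos_of_pos (hr i) _

lemma rmono_le {k : ℕ} {σ s : Fin k → ℝ} (h : ∀ j, 0 < σ j ∧ σ j ≤ s j)
    {β : Fin k → ℝ} (hβ : ∀ j, 0 ≤ β j) : rmono σ β ≤ rmono s β :=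
  Finset.prod_le_prod (fun i _ => (Real.rpow_pos_of_pos (h i).1 _).le)
    (fun i _ => Real.rpow_le_rpow (h i).1.le (h i).2 (hβ i))

lemma exists_min_of_good (A : Set ℝ)
    (hA : A ⊆ Set.Ici (0:ℝ) ∧ ∀ R : ℝ, (A ∩ Set.Icc 0 R).Finite)
    (T : Set ℝ) (hT : T ⊆ A) (hne : T.Nonempty) :
    ∃ x ∈ T, ∀ y ∈ T, x ≤ y := by
  obtain ⟨t, ht⟩ := hne
  have htnn : (0:ℝ) ≤ t := hA.1 (hT ht)
  have hfin : (T ∩ Set.Icc 0 t).Finite :=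
    (hA.2 t).subset (by intro x hx; exact ⟨hT hx.1, hx.2⟩)
  have hnem : (T ∩ Set.Icc 0 t).Nonempty := ⟨t, ht, htnn, le_refl t⟩
  obtain ⟨x, hx, hxmin⟩ := Set.exists_min_image _ id hfin hnem
  refine ⟨x, hx.1, fun y hy => ?_⟩
  by_cases hyt : y ≤ t
  · exact hxmin y ⟨hy, hA.1 (hT hy), hyt⟩
  · exact le_trans hx.2.2 (le_of_not_ge hyt)

lemma exists_lexmin : ∀ {m : ℕ} (A : Fin m → Set ℝ), GoodSupportFamily A →
    ∀ S : Set (Fin m → ℝ), S.Nonempty → (∀ α ∈ S, ∀ i, α i ∈ A i) →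
    ∃ a, IsLexMin S a := by
  intro m
  induction m with
  | zero =>
    rintro A _ S ⟨a, ha⟩ _
    exact ⟨a, ha, fun b _ => Or.inl (funext fun i => i.elim0)⟩
  | succ m ih =>
    intro A hA S hS hSA
    obtain ⟨x₀, hx₀S, hx₀min⟩ :=
      exists_min_of_good (A 0) (hA 0) ((fun α => α 0) '' S)
        (by rintro x ⟨α, hα, rfl⟩; exact hSA α hα 0) (hS.image _)
    set S' : Set (Fin m → ℝ) := Fin.tail '' {α | α ∈ S ∧ α 0 = x₀} with hS'def
    obtain ⟨α₀, hα₀S, hα₀0⟩ : ∃ α ∈ S, α 0 = x₀ := by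
      obtain ⟨α, hα, h⟩ := hx₀S; exact ⟨α, hα, h⟩
    have hS'ne : S'.Nonempty := ⟨Fin.tail α₀, α₀, ⟨hα₀S, hα₀0⟩, rfl⟩
    have hS'mem : ∀ β ∈ S', ∀ i : Fin m, β i ∈ A i.succ := by
      rintro β ⟨α, ⟨hα, _⟩, rfl⟩ i
      exact hSA α hα i.succ
    obtain ⟨t, htS', htmin⟩ := ih (fun i => A i.succ) (fun i => hA i.succ) S' hS'ne hS'mem
    refine ⟨Fin.cons x₀ t, ?_, ?_⟩
    · obtain ⟨α, ⟨hα, hα0⟩, hαt⟩ := htS'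
      have : Fin.cons x₀ t = α := by
        rw [← hα0, ← hαt, Fin.cons_self_tail]
      rwa [this]
    · intro b hb
      have hb0 : x₀ ≤ b 0 := hx₀min _ ⟨b, hb, rfl⟩
      rcases lt_or_eq_of_le hb0 with hlt | heq
      · refine Or.inr ⟨0, fun k hk => absurd hk (by simp), ?_⟩
        simpa using hlt
      · have htb : Fin.tail b ∈ S' := ⟨b, ⟨hb, heq.symm⟩, rfl⟩
        rcases htmin (Fin.tail b) htb with heq2 | ⟨i, hieq, hilt⟩
        · left
          rw [← Fin.cons_self_tail b, ← heq2, ← heq]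
        · refine Or.inr ⟨i.succ, ?_, by simpa [Fin.tail] using hilt⟩
          intro k hk
          revert hk
          refine Fin.cases ?_ (fun j => ?_) k <;> intro hk
          · simpa using heq
          · have : j < i := by
              simpa [Fin.succ_lt_succ_iff] using hk
            simpa [Fin.tail] using hieq j this

lemma peval_summable {m n : ℕ} (r : Fin m → ℝ) (s : Fin n → ℝ)
    (hr : ∀ i, 0 < r i) (hs : ∀ j, 0 < s j)
    (c : (Fin m → ℝ) → (Fin n → ℝ) → ℝ)
    (hβnn : ∀ α β, c α β ≠ 0 → ∀ j, (0:ℝ) ≤ β j)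
    (hnorm : Summable (fun p : (Fin m → ℝ) × (Fin n → ℝ) =>
      |c p.1 p.2| * rmono r p.1 * rmono s p.2))
    (σ : Fin n → ℝ) (hσ : ∀ j, 0 < σ j ∧ σ j ≤ s j) :
    Summable (fun α => |pevalCoeff c σ α| * rmono r α) := by
  set G : (Fin m → ℝ) × (Fin n → ℝ) → ℝ :=
    fun p => |c p.1 p.2| * rmono r p.1 * rmono s p.2 with hGdef
  have hGnn : ∀ p, 0 ≤ G p := fun p =>
    mul_nonneg (mul_nonneg (abs_nonneg _) (rmono_pos hr _).le) (rmono_pos hs _).le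
  obtain ⟨hfib, hsums⟩ := (summable_prod_of_nonneg hGnn).mp hnorm
  have hrpos : ∀ α, (0:ℝ) < rmono r α := rmono_pos hr
  have hle1 : ∀ α β, |c α β * rmono σ β| * rmono r α ≤ G (α, β) := by
    intro α β
    by_cases hc : c α β = 0
    · simp [hc, hGnn (α, β)]
    · have hσβ : rmono σ β ≤ rmono s β := rmono_le hσ (hβnn α β hc)
      have : |c α β * rmono σ β| = |c α β| * rmono σ β := by
        rw [abs_mul, abs_of_pos (rmono_pos (fun j => (hσ j).1) β)]
      rw [this, hGdef]
      calc |c α β| * rmono σ β * rmono r α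
          ≤ |c α β| * rmono s β * rmono r α := by
            apply mul_le_mul_of_nonneg_right _ (hrpos α).le
            exact mul_le_mul_of_nonneg_left hσβ (abs_nonneg _)
        _ = |c α β| * rmono r α * rmono s β := by ring
  apply Summable.of_nonneg_of_le
    (fun α => mul_nonneg (abs_nonneg _) (hrpos α).le) _ hsums
  intro α
  have hfa : Summable fun β => G (α, β) := hfib α
  have h1 : Summable fun β => |c α β * rmono σ β| * rmono r α :=
    Summable.of_nonneg_of_le (fun β => mul_nonneg (abs_nonneg _) (hrpos α).le)
      (hle1 α) hfa
  have hsF : Summable fun β => |c α β * rmono σ β| := by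
    have := h1.mul_right (rmono r α)⁻¹
    simpa [mul_assoc, mul_inv_cancel₀ (hrpos α).ne'] using this
  have habs : |pevalCoeff c σ α| ≤ ∑' β, |c α β * rmono σ β| := by
    have hsF' : Summable fun β => ‖c α β * rmono σ β‖ := by
      simpa only [Real.norm_eq_abs] using hsF
    have h := norm_tsum_le_tsum_norm hsF'
    simp only [Real.norm_eq_abs] at h
    exact h
  calc |pevalCoeff c σ α| * rmono r α
      ≤ (∑' β, |c α β * rmono σ β|) * rmono r α :=
        mul_le_mul_of_nonneg_right habs (hrpos α).le
    _ = ∑' β, |c α β * rmono σ β| * rmono r α := (tsum_mul_right).symm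
    _ ≤ ∑' β, G (α, β) := Summable.tsum_le_tsum (hle1 α) h1 hfa

lemma peval_ne_zero_mem {m n : ℕ} {c : (Fin m → ℝ) → (Fin n → ℝ) → ℝ}
    {σ : Fin n → ℝ} {α : Fin m → ℝ} (h : pevalCoeff c σ α ≠ 0) :
    α ∈ Tsupp c := by
  by_contra hc
  apply h
  simp only [Tsupp, Set.mem_setOf_eq, not_exists, not_not] at hc
  simp [pevalCoeff, hc]

/-- Let `δ = γ/γ′` be a quotient of generalised power series with real
coefficients `c`, `c′`, both with good support and absolutely convergent within the
polyradius `(r,s)`, and `γ ≠ 0 ≠ γ′`.  For admissible `σ` with `0 < σ_j ≤ s_j`, the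
partial evaluation `δ(T,σ) = γ(T,σ)/γ′(T,σ)` is a quotient of convergent generalised
Puiseux series in `T` (numerator and denominator have good support, finite `r`-norm,
and the denominator is nonzero), and its order
`val(δ(T,σ)) = min{α : e_α(σ) ≠ 0} − min{α : e′_α(σ) ≠ 0}` satisfies
`min{α : e_α(σ) ≠ 0} = min(T-supp γ)` and `min{α : e′_α(σ) ≠ 0} = min(T-supp γ′)`
(lexicographic minima); in particular `val(δ(T,σ))` does not depend on the choice of
admissible `σ`.  (The analogous statement for partial evaluation of the `T`-variables
is the instance of this theorem with the roles of the two groups of variables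
exchanged.) -/
theorem partial_evaluation_order
    (m n : ℕ) (r : Fin m → ℝ) (s : Fin n → ℝ)
    (hr : ∀ i, 0 < r i) (hs : ∀ j, 0 < s j)
    (c c' : (Fin m → ℝ) → (Fin n → ℝ) → ℝ)
    (A A' : Fin m → Set ℝ) (B B' : Fin n → Set ℝ)
    (hA : GoodSupportFamily A) (hB : GoodSupportFamily B)
    (hA' : GoodSupportFamily A') (hB' : GoodSupportFamily B')
    (hsupp : ∀ α β, c α β ≠ 0 → (∀ i, α i ∈ A i) ∧ (∀ j, β j ∈ B j))
    (hsupp' : ∀ α β, c' α β ≠ 0 → (∀ i, α i ∈ A' i) ∧ (∀ j, β j ∈ B' j))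
    (hnorm : Summable (fun p : (Fin m → ℝ) × (Fin n → ℝ) =>
      |c p.1 p.2| * rmono r p.1 * rmono s p.2))
    (hnorm' : Summable (fun p : (Fin m → ℝ) × (Fin n → ℝ) =>
      |c' p.1 p.2| * rmono r p.1 * rmono s p.2))
    (hne : ∃ α β, c α β ≠ 0) (hne' : ∃ α β, c' α β ≠ 0)
    (σ : Fin n → ℝ) (hσ : ∀ j, 0 < σ j ∧ σ j ≤ s j)
    (hadm : ∀ α ∈ Tsupp c, pevalCoeff c σ α ≠ 0)
    (hadm' : ∀ α ∈ Tsupp c', pevalCoeff c' σ α ≠ 0) :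
    -- the partial evaluations are convergent generalised Puiseux series in `T`:
    Summable (fun α => |pevalCoeff c σ α| * rmono r α) ∧
    Summable (fun α => |pevalCoeff c' σ α| * rmono r α) ∧
    (∀ α, pevalCoeff c σ α ≠ 0 → ∀ i, α i ∈ A i) ∧
    (∀ α, pevalCoeff c' σ α ≠ 0 → ∀ i, α i ∈ A' i) ∧
    (∃ α, pevalCoeff c' σ α ≠ 0) ∧
    -- the order of `δ(T,σ)` is the difference of the lexicographic minima of the
    -- supports of the evaluated numerator and denominator, and these coincide with
    -- the minima of the `T`-supports of `γ` and `γ′` — hence `val (δ(T,σ))` is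
    -- independent of the admissible `σ` chosen:
    (∃ α₀ α₁ : Fin m → ℝ,
      IsLexMin {α | pevalCoeff c σ α ≠ 0} α₀ ∧ IsLexMin (Tsupp c) α₀ ∧
      IsLexMin {α | pevalCoeff c' σ α ≠ 0} α₁ ∧ IsLexMin (Tsupp c') α₁) := by
  have hset : {α | pevalCoeff c σ α ≠ 0} = Tsupp c := by
    ext α
    exact ⟨fun h => peval_ne_zero_mem h, fun h => hadm α h⟩
  have hset' : {α | pevalCoeff c' σ α ≠ 0} = Tsupp c' := by
    ext α
    exact ⟨fun h => peval_ne_zero_mem h, fun h => hadm' α h⟩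
  refine ⟨peval_summable r s hr hs c (fun α β h j => (hB j).1 ((hsupp α β h).2 j)) hnorm σ hσ,
    peval_summable r s hr hs c' (fun α β h j => (hB' j).1 ((hsupp' α β h).2 j)) hnorm' σ hσ,
    ?_, ?_, ?_, ?_⟩
  · intro α h i
    obtain ⟨β, hβ⟩ := peval_ne_zero_mem h
    exact (hsupp α β hβ).1 i
  · intro α h i
    obtain ⟨β, hβ⟩ := peval_ne_zero_mem h
    exact (hsupp' α β hβ).1 i
  · obtain ⟨α, β, h⟩ := hne'
    exact ⟨α, hadm' α ⟨β, h⟩⟩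
  · obtain ⟨a₀, ha₀⟩ := exists_lexmin A hA (Tsupp c)
      (by obtain ⟨α, β, h⟩ := hne; exact ⟨α, β, h⟩)
      (fun α ⟨β, h⟩ i => (hsupp α β h).1 i)
    obtain ⟨a₁, ha₁⟩ := exists_lexmin A' hA' (Tsupp c')
      (by obtain ⟨α, β, h⟩ := hne'; exact ⟨α, β, h⟩)
      (fun α ⟨β, h⟩ i => (hsupp' α β h).1 i)
    exact ⟨a₀, a₁, hset ▸ ha₀, ha₀, hset' ▸ ha₁, ha₁⟩
end
end

section
/- Let f be a rank two tropical polynomial with finite support A ⊆ ℤ^d and coefficients w_s ∈ ℝ². Then each support cell P_S(f) is a lex-polyhedron, and the rank two tropical hypersurface V₂(f) is a lex-polyhedral complex whose cells are exactly the support cells P_S(f) for support sets S of f with |S| > 1; in particular V₂(f) = ⋃ {P_S(f) : S a support set of f, |S|>1}, and this collection of lex-polyhedra is closed under taking faces and pairwise intersections. -/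
noncomputable section
open Finset Pointwise

/-- Lexicographic order on `ℝ²`. -/
def lexLe (a b : ℝ × ℝ) : Prop := a.1 < b.1 ∨ (a.1 = b.1 ∧ a.2 ≤ b.2)

variable {d : ℕ}

/-- The pairing `⟨s,p⟩ = ∑ i, s i • p i ∈ ℝ²` between `ℤ^d` and `(T₂)^d`. -/
def pair2 (s : Fin d → ℤ) (p : Fin d → ℝ × ℝ) : ℝ × ℝ :=
  (∑ i, (s i : ℝ) * (p i).1, ∑ i, (s i : ℝ) * (p i).2)

/-- A rank two tropical polynomial: a finite nonempty support `A ⊆ ℤ^d` together with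
coefficients `w s ∈ ℝ²`. -/
structure TropPoly2 (d : ℕ) where
  A : Finset (Fin d → ℤ)
  hA : A.Nonempty
  w : (Fin d → ℤ) → ℝ × ℝ

/-- `D_p(f)`: the set of monomials where `trop₂(f)` attains its (lexicographic) minimum
at `p`. -/
def Dset (f : TropPoly2 d) (p : Fin d → ℝ × ℝ) : Set (Fin d → ℤ) :=
  {s | s ∈ f.A ∧ ∀ s' ∈ f.A, lexLe (f.w s + pair2 s p) (f.w s' + pair2 s' p)}

/-- The support cell `P_S(f) = {p : S ⊆ D_p(f)}`. -/
def cellP (f : TropPoly2 d) (S : Set (Fin d → ℤ)) : Set (Fin d → ℝ × ℝ) :=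
  {p | S ⊆ Dset f p}

/-- `S` is a support set of `f`. -/
def IsSupportSet (f : TropPoly2 d) (S : Set (Fin d → ℤ)) : Prop :=
  S ⊆ f.A ∧ ∀ T : Set (Fin d → ℤ), T ⊆ f.A → cellP f T = cellP f S → T ⊆ S

/-- The rank two tropical hypersurface `V₂(f) = {p : |D_p(f)| > 1}`. -/
def tropHyp2 (f : TropPoly2 d) : Set (Fin d → ℝ × ℝ) :=
  {p | (Dset f p).Nontrivial}

/-- Rank one: `D_x` for a tropical polynomial with support `A` and coefficients `c`. -/
def Dset1 (A : Set (Fin d → ℤ)) (c : (Fin d → ℤ) → ℝ) (x : Fin d → ℝ) :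
    Set (Fin d → ℤ) :=
  {s | s ∈ A ∧ ∀ s' ∈ A, c s + ∑ i, (s i : ℝ) * x i ≤ c s' + ∑ i, (s i : ℝ) * x i}

/-- Rank one support cell `Q_S`. -/
def cell1 (A : Set (Fin d → ℤ)) (c : (Fin d → ℤ) → ℝ) (S : Set (Fin d → ℤ)) :
    Set (Fin d → ℝ) :=
  {x | S ⊆ Dset1 A c x}

/-- Rank one support set. -/
def IsSupportSet1 (A : Set (Fin d → ℤ)) (c : (Fin d → ℤ) → ℝ)
    (S : Set (Fin d → ℤ)) : Prop :=
  S ⊆ A ∧ ∀ T : Set (Fin d → ℤ), T ⊆ A → cell1 A c T = cell1 A c S → T ⊆ S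

/-- Rank one tropical hypersurface. -/
def tropHyp1 (A : Set (Fin d → ℤ)) (c : (Fin d → ℤ) → ℝ) : Set (Fin d → ℝ) :=
  {x | (Dset1 A c x).Nontrivial}

/-- Projection onto the first (`t`-side) coordinates. -/
def piU (p : Fin d → ℝ × ℝ) : Fin d → ℝ := fun i => (p i).1

/-- Projection onto the second (`u`-side) coordinates. -/
def piT (p : Fin d → ℝ × ℝ) : Fin d → ℝ := fun i => (p i).2

-- faces of support cells (canonical representation)
def faceP (f : TropPoly2 d) (S : Set (Fin d → ℤ))
    (E : Set ((Fin d → ℤ) × (Fin d → ℤ))) : Set (Fin d → ℝ × ℝ) :=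
  cellP f S ∩ {p | ∀ e ∈ E, f.w e.1 + pair2 e.1 p = f.w e.2 + pair2 e.2 p}

def IsFaceP (f : TropPoly2 d) (S : Set (Fin d → ℤ)) (F : Set (Fin d → ℝ × ℝ)) : Prop :=
  ∃ E : Set ((Fin d → ℤ) × (Fin d → ℤ)),
    (∀ e ∈ E, e.1 ∈ S ∧ e.2 ∈ f.A) ∧ F = faceP f S E

def IsProperFaceP (f : TropPoly2 d) (S : Set (Fin d → ℤ))
    (F : Set (Fin d → ℝ × ℝ)) : Prop :=
  IsFaceP f S F ∧ F ≠ cellP f S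

def relintP (f : TropPoly2 d) (S : Set (Fin d → ℤ)) : Set (Fin d → ℝ × ℝ) :=
  {p | p ∈ cellP f S ∧ ∀ F, IsProperFaceP f S F → p ∉ F}

/-- A lex-polyhedron in `(T₂)^d`: a finite intersection of lex-halfspaces. -/
def IsLexPolyhedron (P : Set (Fin d → ℝ × ℝ)) : Prop :=
  ∃ (k : ℕ) (s : Fin k → Fin d → ℤ) (q : Fin k → ℝ × ℝ),
    P = {p | ∀ i, lexLe (pair2 (s i) p) (q i)}


lemma lexLe_antisymm' {a b : ℝ × ℝ} (h1 : lexLe a b) (h2 : lexLe b a) : a = b := by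
  have hf : a.1 = b.1 := by
    rcases h1 with h | ⟨h, _⟩ <;> rcases h2 with h' | ⟨h', _⟩ <;> linarith
  have hs : a.2 = b.2 := by
    rcases h1 with h | ⟨_, h⟩ <;> rcases h2 with h' | ⟨_, h'⟩ <;> linarith
  exact Prod.ext hf hs

lemma pair2_sub' (s s' : Fin d → ℤ) (p : Fin d → ℝ × ℝ) :
    pair2 (s - s') p = pair2 s p - pair2 s' p := by
  unfold pair2
  rw [Prod.mk_sub_mk, ← Finset.sum_sub_distrib, ← Finset.sum_sub_distrib]
  refine congrArg₂ Prod.mk ?_ ?_ <;>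
    (refine Finset.sum_congr rfl fun i _ => ?_; push_cast [Pi.sub_apply]; ring)

lemma lexLe_add_iff' (a b c e : ℝ × ℝ) :
    lexLe (a + b) (c + e) ↔ lexLe (b - e) (c - a) := by
  unfold lexLe
  simp only [Prod.fst_add, Prod.snd_add, Prod.fst_sub, Prod.snd_sub]
  constructor <;> rintro (h | ⟨h1, h2⟩)
  · left; linarith
  · right; constructor <;> linarith
  · left; linarith
  · right; constructor <;> linarith

lemma lexLe_key (f : TropPoly2 d) (s s' : Fin d → ℤ) (p : Fin d → ℝ × ℝ) :
    lexLe (f.w s + pair2 s p) (f.w s' + pair2 s' p) ↔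
    lexLe (pair2 (s - s') p) (f.w s' - f.w s) := by
  rw [pair2_sub', lexLe_add_iff']

lemma cellP_poly (f : TropPoly2 d) (S : Set (Fin d → ℤ)) (hS : S ⊆ ↑f.A) :
    IsLexPolyhedron (cellP f S) := by
  classical
  have hfin : S.Finite := f.A.finite_toSet.subset hS
  let E : Finset ((Fin d → ℤ) × (Fin d → ℤ)) := hfin.toFinset ×ˢ f.A
  let g : Fin E.card → {x // x ∈ E} := E.equivFin.symm
  refine ⟨E.card, fun i => (g i).1.1 - (g i).1.2,
    fun i => f.w (g i).1.2 - f.w (g i).1.1, ?_⟩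
  ext p
  simp only [Set.mem_setOf_eq]
  constructor
  · intro hp i
    have hmem := (g i).2
    rw [Finset.mem_product] at hmem
    have h1 : (g i).1.1 ∈ S := hfin.mem_toFinset.mp hmem.1
    have h2 := (hp h1).2 (g i).1.2 hmem.2
    rwa [lexLe_key] at h2
  · intro hp s hs
    refine ⟨hS hs, fun s' hs' => ?_⟩
    have hmem : (s, s') ∈ E :=
      Finset.mem_product.mpr ⟨hfin.mem_toFinset.mpr hs, hs'⟩
    have h := hp (E.equivFin ⟨(s, s'), hmem⟩)
    rw [lexLe_key]
    simpa [g, Equiv.symm_apply_apply] using h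

/-- The support-set closure of `T`. -/
def clo (f : TropPoly2 d) (T : Set (Fin d → ℤ)) : Set (Fin d → ℤ) :=
  {s | s ∈ f.A ∧ ∀ p ∈ cellP f T, s ∈ Dset f p}

lemma subset_clo (f : TropPoly2 d) {T : Set (Fin d → ℤ)} (hT : T ⊆ ↑f.A) :
    T ⊆ clo f T := fun t ht => ⟨hT ht, fun _ hp => hp ht⟩

lemma cellP_clo (f : TropPoly2 d) {T : Set (Fin d → ℤ)} (hT : T ⊆ ↑f.A) :
    cellP f (clo f T) = cellP f T := by
  apply Set.Subset.antisymm
  · intro p hp t ht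
    exact hp (subset_clo f hT ht)
  · intro p hp s hs
    exact hs.2 p hp

lemma clo_supportSet (f : TropPoly2 d) {T : Set (Fin d → ℤ)} (hT : T ⊆ ↑f.A) :
    IsSupportSet f (clo f T) := by
  refine ⟨fun s hs => hs.1, fun T' hT' heq t ht => ?_⟩
  refine ⟨hT' ht, fun p hp => ?_⟩
  have hp' : p ∈ cellP f T' := by
    rw [heq, cellP_clo f hT]; exact hp
  exact hp' ht

lemma faceP_eq (f : TropPoly2 d) (S : Set (Fin d → ℤ))
    (E : Set ((Fin d → ℤ) × (Fin d → ℤ))) (hE : ∀ e ∈ E, e.1 ∈ S ∧ e.2 ∈ f.A) :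
    faceP f S E = cellP f (S ∪ Prod.snd '' E) := by
  ext p
  constructor
  · rintro ⟨hp, heq⟩ s hs
    rcases hs with hs | ⟨e, he, rfl⟩
    · exact hp hs
    · refine ⟨(hE e he).2, fun s' hs' => ?_⟩
      have h1 := hp (hE e he).1
      rw [← heq e he]
      exact h1.2 s' hs'
  · intro hp
    refine ⟨fun s hs => hp (Or.inl hs), fun e he => ?_⟩
    have h1 := hp (Or.inl (hE e he).1)
    have h2 := hp (Or.inr ⟨e, he, rfl⟩)
    exact lexLe_antisymm' (h1.2 e.2 h2.1) (h2.2 e.1 h1.1)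

/-- Each support cell of a rank two tropical polynomial `f` is a
lex-polyhedron, and the rank two tropical hypersurface `V₂(f)` is a lex-polyhedral
complex whose cells are exactly the support cells `P_S(f)` for support sets `S` with
`|S| > 1`: it is the union of these, and this collection of lex-polyhedra is closed
under taking faces and pairwise intersections. -/
theorem hypersurface_lexComplex (d : ℕ) (f : TropPoly2 d) :
    (∀ S : Set (Fin d → ℤ), IsSupportSet f S → IsLexPolyhedron (cellP f S)) ∧
    tropHyp2 f =
      ⋃ S ∈ {S : Set (Fin d → ℤ) | IsSupportSet f S ∧ S.Nontrivial}, cellP f S ∧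
    (∀ S : Set (Fin d → ℤ), IsSupportSet f S → S.Nontrivial →
      ∀ F, IsFaceP f S F →
        ∃ S' : Set (Fin d → ℤ), IsSupportSet f S' ∧ S'.Nontrivial ∧ F = cellP f S') ∧
    (∀ S T : Set (Fin d → ℤ),
      IsSupportSet f S → S.Nontrivial → IsSupportSet f T → T.Nontrivial →
        ∃ S' : Set (Fin d → ℤ), IsSupportSet f S' ∧ S'.Nontrivial ∧
          cellP f S ∩ cellP f T = cellP f S') := by
  refine ⟨fun S hS => cellP_poly f S hS.1, ?_, ?_, ?_⟩
  · ext p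
    simp only [Set.mem_iUnion, Set.mem_setOf_eq, exists_prop]
    constructor
    · intro h
      refine ⟨Dset f p, ⟨⟨fun s hs => hs.1, fun T hT heq => ?_⟩, h⟩, fun s hs => hs⟩
      have hp : p ∈ cellP f T := by
        rw [heq]; exact fun s hs => hs
      exact hp
    · rintro ⟨S, ⟨hSsupp, hSnt⟩, hp⟩
      exact hSnt.mono hp
  · rintro S hS hSnt F ⟨E, hE, rfl⟩
    have hT : S ∪ Prod.snd '' E ⊆ ↑f.A := by
      rintro s (hs | ⟨e, he, rfl⟩)
      · exact hS.1 hs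
      · exact (hE e he).2
    refine ⟨clo f (S ∪ Prod.snd '' E), clo_supportSet f hT,
      hSnt.mono ((Set.subset_union_left).trans (subset_clo f hT)), ?_⟩
    rw [faceP_eq f S E hE, cellP_clo f hT]
  · intro S T hS hSnt hT hTnt
    have hST : S ∪ T ⊆ ↑f.A := Set.union_subset hS.1 hT.1
    refine ⟨clo f (S ∪ T), clo_supportSet f hST,
      hSnt.mono ((Set.subset_union_left).trans (subset_clo f hST)), ?_⟩
    rw [cellP_clo f hST]
    ext p
    constructor
    · rintro ⟨h1, h2⟩ s hs
      rcases hs with hs | hs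
      exacts [h1 hs, h2 hs]
    · intro h
      exact ⟨fun s hs => h (Or.inl hs), fun s hs => h (Or.inr hs)⟩
end
end

section
/- Let 𝕂 be the field of generalised Puiseux series in two variables t, u with real coefficients, i.e. the Hahn series field over ℝ with value group ℝ² ordered lexicographically (formal series ∑_α c_α t^{α₁} u^{α₂} with well-ordered support in Lex ℝ²), ordered so that a nonzero series is positive iff its leading coefficient is positive, and let val₂ : 𝕂 → T₂ ∪ {∞} send a nonzero series to the lexicographic minimum of its support and 0 to ∞, applied to 𝕂^d coordinatewise. If K ⊆ 𝕂_{≥0}^d is an ordinary cone, then val₂(K) is a rank two tropical cone in (T₂ ∪ {∞})^d, and conversely every rank two tropical cone arises as val₂(K) for some ordinary cone K ⊆ 𝕂_{≥0}^d. Furthermore, if K is polyhedral then val₂(K) is a polyhedral rank two tropical cone, and conversely every polyhedral rank two tropical cone is the image under val₂ of a polyhedral cone. -/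
/-!
Leading coefficients of nonnegative series cannot cancel, so on `𝕂_{≥0}` the valuation `val₂`
turns `+` into `min` and `·` into `+`, and the monomials `λ ↦ t^λ` form a section of it. Hence
`val₂` maps nonnegative combinations onto tropical combinations of the valuations: the image of a
cone is a tropical cone, a tropical cone is the image of its nonnegative preimage, and generators
of a polyhedral cone map to generators of its image, while monomial lifts of tropical generators
generate a cone with the given image.
-/

noncomputable section
open scoped Classical

/-- The value group `ℝ²` with the lexicographic ordering. -/
abbrev Gamma2 := Lex (ℝ × ℝ)

/-- The field `𝕂` of generalised Puiseux series in two variables: Hahn series over `ℝ`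
with value group `Lex ℝ²`. -/
abbrev K2 := HahnSeries Gamma2 ℝ

/-- A nonzero series is positive iff its leading coefficient is positive. -/
def posK (x : K2) : Prop := x ≠ 0 ∧ 0 < x.coeff x.order

/-- Nonnegative elements of `𝕂`. -/
def nnegK (x : K2) : Prop := x = 0 ∨ posK x

/-- The rank two valuation: the lexicographic minimum of the support, and `∞` on `0`. -/
def val2K (x : K2) : WithTop Gamma2 := if x = 0 then ⊤ else ↑x.order

/-- Coordinatewise rank two valuation on `𝕂^d`. -/
def val2vec {d : ℕ} (x : Fin d → K2) : Fin d → WithTop Gamma2 := fun i => val2K (x i)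

/-- An ordinary cone in `𝕂^d`. -/
def IsConeK {d : ℕ} (K : Set (Fin d → K2)) : Prop :=
  K.Nonempty ∧ ∀ p ∈ K, ∀ q ∈ K, ∀ l m : K2, nnegK l → nnegK m → l • p + m • q ∈ K

/-- A polyhedral (finitely generated) cone in `𝕂^d`. -/
def IsPolyConeK {d : ℕ} (K : Set (Fin d → K2)) : Prop :=
  ∃ (n : ℕ) (v : Fin n → Fin d → K2),
    K = {x | ∃ l : Fin n → K2, (∀ j, nnegK (l j)) ∧ x = ∑ j, l j • v j}

/-- The tropical combination `min(λ+p, μ+q)` in `(T₂ ∪ {∞})^d`. -/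
def tropComb2 {d : ℕ} (l m : WithTop Gamma2) (p q : Fin d → WithTop Gamma2) :
    Fin d → WithTop Gamma2 :=
  fun i => min (l + p i) (m + q i)

/-- A rank two tropical cone in `(T₂ ∪ {∞})^d`. -/
def IsTropCone2 {d : ℕ} (M : Set (Fin d → WithTop Gamma2)) : Prop :=
  M.Nonempty ∧ ∀ p ∈ M, ∀ q ∈ M, ∀ l m : WithTop Gamma2, tropComb2 l m p q ∈ M

/-- A polyhedral (finitely generated) rank two tropical cone. -/
def IsPolyTropCone2 {d : ℕ} (M : Set (Fin d → WithTop Gamma2)) : Prop :=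
  ∃ (n : ℕ) (v : Fin n → Fin d → WithTop Gamma2),
    M = {x | ∃ lam : Fin n → WithTop Gamma2,
      x = fun i => Finset.univ.inf fun j => lam j + v j i}


namespace HahnSeries

variable {Γ R : Type*} [LinearOrder Γ] [LinearOrder R] [AddCommGroup R] [IsOrderedAddMonoid R]

theorem orderTop_ofLex_le_of_le {x y : Lex R⟦Γ⟧} (hx : 0 ≤ x) (hxy : x ≤ y) :
    (ofLex y).orderTop ≤ (ofLex x).orderTop := by
  by_contra! h
  have := abs_lt_abs_of_orderTop_ofLex h
  rw [abs_of_nonneg hx, abs_of_nonneg (hx.trans hxy)] at this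
  exact this.not_ge hxy

theorem orderTop_ofLex_add_of_nonneg {x y : Lex R⟦Γ⟧} (hx : 0 ≤ x) (hy : 0 ≤ y) :
    (ofLex (x + y)).orderTop = min (ofLex x).orderTop (ofLex y).orderTop :=
  le_antisymm
    (le_min (orderTop_ofLex_le_of_le hx (le_add_of_nonneg_right hy))
      (orderTop_ofLex_le_of_le hy (le_add_of_nonneg_left hx)))
    min_orderTop_le_orderTop_add

end HahnSeries

theorem val2K_eq_orderTop (x : K2) : val2K x = x.orderTop := by
  unfold val2K
  split_ifs with hx
  · rw [hx, HahnSeries.orderTop_zero]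
  · exact HahnSeries.order_eq_orderTop_of_ne_zero hx

theorem nnegK_iff (x : K2) : nnegK x ↔ 0 ≤ toLex x := by
  rw [← HahnSeries.leadingCoeff_nonneg_iff, ofLex_toLex, nnegK, posK]
  rcases eq_or_ne x 0 with rfl | hx
  · simp
  · have hc : x.coeff x.order ≠ 0 := HahnSeries.coeff_order_eq_zero.not.mpr hx
    rw [HahnSeries.leadingCoeff_eq, or_iff_right hx, and_iff_right hx, le_iff_lt_or_eq,
      or_iff_left hc.symm]

theorem nnegK_zero : nnegK 0 := Or.inl rfl

theorem nnegK_one : nnegK 1 := by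
  rw [nnegK_iff, toLex_one]
  exact zero_le_one

theorem nnegK_add {x y : K2} (hx : nnegK x) (hy : nnegK y) : nnegK (x + y) := by
  rw [nnegK_iff] at *
  exact add_nonneg hx hy

theorem nnegK_mul {x y : K2} (hx : nnegK x) (hy : nnegK y) : nnegK (x * y) := by
  rw [nnegK_iff] at *
  exact mul_nonneg hx hy

theorem val2K_add_of_nnegK {x y : K2} (hx : nnegK x) (hy : nnegK y) :
    val2K (x + y) = min (val2K x) (val2K y) := by
  rw [nnegK_iff] at hx hy
  simp only [val2K_eq_orderTop]
  exact HahnSeries.orderTop_ofLex_add_of_nonneg hx hy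

theorem val2K_mul (x y : K2) : val2K (x * y) = val2K x + val2K y := by
  simp only [val2K_eq_orderTop]
  exact HahnSeries.orderTop_mul x y

theorem nnegK_sum {ι : Type*} (s : Finset ι) {f : ι → K2} (hf : ∀ j ∈ s, nnegK (f j)) :
    nnegK (∑ j ∈ s, f j) :=
  Finset.sum_induction f nnegK (fun _ _ => nnegK_add) nnegK_zero hf

theorem val2K_sum_of_nnegK {ι : Type*} (s : Finset ι) {f : ι → K2}
    (hf : ∀ j ∈ s, nnegK (f j)) : val2K (∑ j ∈ s, f j) = s.inf fun j => val2K (f j) := by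
  induction s using Finset.cons_induction with
  | empty => simp [val2K_eq_orderTop]
  | cons a s _ ih =>
    have hs : ∀ j ∈ s, nnegK (f j) := fun j hj => hf j (Finset.mem_cons_of_mem hj)
    rw [Finset.sum_cons, Finset.inf_cons,
      val2K_add_of_nnegK (hf a (Finset.mem_cons_self a s)) (nnegK_sum s hs), ih hs]

/-- The monomial `t^λ₁ u^λ₂` for `λ ∈ T₂`, and `0` for `λ = ∞`. -/
def monomialK : WithTop Gamma2 → K2
  | ⊤ => 0
  | (a : Gamma2) => HahnSeries.single a 1

theorem nnegK_monomialK (l : WithTop Gamma2) : nnegK (monomialK l) := by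
  cases l with
  | top => exact nnegK_zero
  | coe a =>
    rw [nnegK_iff, ← HahnSeries.leadingCoeff_nonneg_iff]
    simp [monomialK, HahnSeries.leadingCoeff_of_single]

theorem val2K_monomialK (l : WithTop Gamma2) : val2K (monomialK l) = l := by
  cases l with
  | top => simp [monomialK, val2K_eq_orderTop]
  | coe a => simp [monomialK, val2K_eq_orderTop, HahnSeries.orderTop_single]

theorem val2vec_monomialK {d : ℕ} (y : Fin d → WithTop Gamma2) :
    val2vec (fun i => monomialK (y i)) = y :=
  funext fun i => val2K_monomialK (y i)

section

variable {d : ℕ}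

theorem val2vec_smul_add_smul {p q : Fin d → K2} {l m : K2} (hp : ∀ i, nnegK (p i))
    (hq : ∀ i, nnegK (q i)) (hl : nnegK l) (hm : nnegK m) :
    val2vec (l • p + m • q) = tropComb2 (val2K l) (val2K m) (val2vec p) (val2vec q) := by
  funext i
  simp only [val2vec, tropComb2, Pi.add_apply, Pi.smul_apply, smul_eq_mul]
  rw [val2K_add_of_nnegK (nnegK_mul hl (hp i)) (nnegK_mul hm (hq i)), val2K_mul, val2K_mul]

def nonnegSpan {n : ℕ} (v : Fin n → Fin d → K2) : Set (Fin d → K2) :=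
  {x | ∃ l : Fin n → K2, (∀ j, nnegK (l j)) ∧ x = ∑ j, l j • v j}

def tropSpan {n : ℕ} (w : Fin n → Fin d → WithTop Gamma2) : Set (Fin d → WithTop Gamma2) :=
  {x | ∃ lam : Fin n → WithTop Gamma2, x = fun i => Finset.univ.inf fun j => lam j + w j i}

variable {n : ℕ} {v : Fin n → Fin d → K2}

theorem mem_nonnegSpan_self (j : Fin n) : v j ∈ nonnegSpan v := by
  refine ⟨Pi.single j 1, fun k => ?_, ?_⟩
  · rcases eq_or_ne k j with rfl | hk
    · simpa using nnegK_one
    · simpa [hk] using nnegK_zero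
  · rw [Finset.sum_eq_single_of_mem j (Finset.mem_univ j) fun k _ hk => by
      rw [Pi.single_eq_of_ne hk]; exact zero_smul K2 (v k), Pi.single_eq_same, one_smul]

theorem nnegK_of_mem_nonnegSpan (hv : ∀ j i, nnegK (v j i)) {x : Fin d → K2}
    (hx : x ∈ nonnegSpan v) (i : Fin d) : nnegK (x i) := by
  obtain ⟨l, hl, rfl⟩ := hx
  simp only [Finset.sum_apply, Pi.smul_apply, smul_eq_mul]
  exact nnegK_sum _ fun j _ => nnegK_mul (hl j) (hv j i)

theorem val2K_sum_smul_apply (hv : ∀ j i, nnegK (v j i)) {l : Fin n → K2}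
    (hl : ∀ j, nnegK (l j)) (i : Fin d) :
    val2K ((∑ j, l j • v j) i) = Finset.univ.inf fun j => val2K (l j) + val2K (v j i) := by
  simp only [Finset.sum_apply, Pi.smul_apply, smul_eq_mul, ← val2K_mul]
  exact val2K_sum_of_nnegK _ fun j _ => nnegK_mul (hl j) (hv j i)

theorem val2vec_image_nonnegSpan (hv : ∀ j i, nnegK (v j i)) :
    val2vec '' nonnegSpan v = tropSpan fun j => val2vec (v j) := by
  ext y
  constructor
  · rintro ⟨x, ⟨l, hl, rfl⟩, rfl⟩
    exact ⟨fun j => val2K (l j), funext fun i => val2K_sum_smul_apply hv hl i⟩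
  · rintro ⟨lam, rfl⟩
    refine ⟨_, ⟨fun j => monomialK (lam j), fun j => nnegK_monomialK _, rfl⟩, funext fun i => ?_⟩
    simp only [val2vec, val2K_sum_smul_apply hv (fun j => nnegK_monomialK (lam j)) i,
      val2K_monomialK]

end

section

variable {d : ℕ}

theorem IsConeK.isTropCone2_image {K : Set (Fin d → K2)} (hK : IsConeK K)
    (hnneg : ∀ x ∈ K, ∀ i, nnegK (x i)) : IsTropCone2 (val2vec '' K) := by
  refine ⟨hK.1.image _, ?_⟩
  rintro _ ⟨p, hp, rfl⟩ _ ⟨q, hq, rfl⟩ l m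
  refine ⟨monomialK l • p + monomialK m • q,
    hK.2 p hp q hq _ _ (nnegK_monomialK l) (nnegK_monomialK m), ?_⟩
  rw [val2vec_smul_add_smul (hnneg p hp) (hnneg q hq) (nnegK_monomialK l)
    (nnegK_monomialK m), val2K_monomialK, val2K_monomialK]

theorem IsTropCone2.exists_isConeK {M : Set (Fin d → WithTop Gamma2)} (hM : IsTropCone2 M) :
    ∃ K : Set (Fin d → K2), (∀ x ∈ K, ∀ i, nnegK (x i)) ∧ IsConeK K ∧ val2vec '' K = M := by
  have hlift : ∀ y ∈ M, (fun i => monomialK (y i)) ∈ {x | (∀ i, nnegK (x i)) ∧ val2vec x ∈ M} :=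
    fun y hy => ⟨fun i => nnegK_monomialK (y i), by rwa [val2vec_monomialK]⟩
  refine ⟨{x | (∀ i, nnegK (x i)) ∧ val2vec x ∈ M}, fun x hx => hx.1, ⟨?_, ?_⟩, ?_⟩
  · obtain ⟨y, hy⟩ := hM.1
    exact ⟨_, hlift y hy⟩
  · rintro p ⟨hp, hpM⟩ q ⟨hq, hqM⟩ l m hl hm
    refine ⟨fun i => nnegK_add (nnegK_mul hl (hp i)) (nnegK_mul hm (hq i)), ?_⟩
    rw [val2vec_smul_add_smul hp hq hl hm]
    exact hM.2 _ hpM _ hqM _ _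
  · refine Set.Subset.antisymm (Set.image_subset_iff.mpr fun x hx => hx.2) fun y hy => ?_
    exact ⟨_, hlift y hy, val2vec_monomialK y⟩

theorem IsPolyConeK.isPolyTropCone2_image {K : Set (Fin d → K2)} (hK : IsPolyConeK K)
    (hnneg : ∀ x ∈ K, ∀ i, nnegK (x i)) : IsPolyTropCone2 (val2vec '' K) := by
  obtain ⟨n, v, rfl⟩ := hK
  exact ⟨n, _, val2vec_image_nonnegSpan fun j => hnneg _ (mem_nonnegSpan_self j)⟩

theorem IsPolyTropCone2.exists_isPolyConeK {M : Set (Fin d → WithTop Gamma2)}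
    (hM : IsPolyTropCone2 M) :
    ∃ K : Set (Fin d → K2), (∀ x ∈ K, ∀ i, nnegK (x i)) ∧ IsPolyConeK K ∧
      val2vec '' K = M := by
  obtain ⟨n, w, rfl⟩ := hM
  have hv : ∀ j i, nnegK (monomialK (w j i)) := fun j i => nnegK_monomialK _
  refine ⟨nonnegSpan fun j i => monomialK (w j i), ?_, ⟨n, _, rfl⟩, ?_⟩
  · exact fun x hx => nnegK_of_mem_nonnegSpan hv hx
  · rw [val2vec_image_nonnegSpan hv]
    exact congrArg tropSpan (funext fun j => val2vec_monomialK (w j))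

end

/-- If `K ⊆ 𝕂_{≥0}^d` is an ordinary cone then `val₂(K)` is a rank
two tropical cone, and conversely every rank two tropical cone arises this way;
moreover polyhedral cones tropicalise to polyhedral rank two tropical cones, and
every polyhedral rank two tropical cone is the image of a polyhedral cone. -/
theorem tropicalisation_of_cones (d : ℕ) :
    (∀ K : Set (Fin d → K2), (∀ x ∈ K, ∀ i, nnegK (x i)) → IsConeK K →
      IsTropCone2 (val2vec '' K)) ∧
    (∀ M : Set (Fin d → WithTop Gamma2), IsTropCone2 M →
      ∃ K : Set (Fin d → K2), (∀ x ∈ K, ∀ i, nnegK (x i)) ∧ IsConeK K ∧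
        val2vec '' K = M) ∧
    (∀ K : Set (Fin d → K2), (∀ x ∈ K, ∀ i, nnegK (x i)) → IsPolyConeK K →
      IsPolyTropCone2 (val2vec '' K)) ∧
    (∀ M : Set (Fin d → WithTop Gamma2), IsPolyTropCone2 M →
      ∃ K : Set (Fin d → K2), (∀ x ∈ K, ∀ i, nnegK (x i)) ∧ IsPolyConeK K ∧
        val2vec '' K = M) :=
  ⟨fun _ hnneg hK => hK.isTropCone2_image hnneg,
    fun _ hM => hM.exists_isConeK,
    fun _ hnneg hK => hK.isPolyTropCone2_image hnneg,
    fun _ hM => hM.exists_isPolyConeK⟩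
end
end

section
/- Let K ⊆ (T₂ ∪ {∞})^d be the rank two tropical cone generated by v^(1), …, v^(n) ∈ (T₂ ∪ {∞})^d. Then a point p ∈ (T₂)^d (all coordinates finite) lies in K if and only if for every index i ∈ {1,…,d} there exists some j ∈ {1,…,n} with v^(j)_i ≠ ∞ and p ∈ Z_i(v^(j)). -/
/-!
If `p = min_j (λ_j + v^(j))`, the minimum at coordinate `i` is attained by some `j`; this forces
`λ_j = p_i − v^(j)_i`, and then the inequalities `p_k ≤ λ_j + v^(j)_k` at the other coordinates
say exactly that `p ∈ Z_i(v^(j))`. Conversely, given a sector witness `j(i)` for every `i`, the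
coefficients `λ_j = min_{j(i) = j} (p_i − v^(j)_i)` satisfy `λ_j + v^(j) ≥ p` by the sector
conditions, with equality at `i` coming from the term `j = j(i)`.
-/

noncomputable section
open scoped Classical

/-- The rank two tropical semifield `T₂`: `ℝ²` with the lexicographic order. -/
abbrev T2 := Lex (ℝ × ℝ)

/-- `T₂ ∪ {∞}`. -/
abbrev T2i := WithTop T2

variable {d n : ℕ}

/-- The tropical linear combination `min_j (λ_j + v^(j))` of generators. -/
def tropCombN (v : Fin n → Fin d → T2i) (lam : Fin n → T2i) : Fin d → T2i :=
  fun i => Finset.univ.inf fun j => lam j + v j i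

/-- The rank two tropical cone generated by `v^(1), …, v^(n)`. -/
def genCone (v : Fin n → Fin d → T2i) : Set (Fin d → T2i) :=
  {x | ∃ lam : Fin n → T2i, x = tropCombN v lam}

/-- The `i`-th sector of `u`:
`Z_i(u) = ⋂_{k, u_k ≠ ∞} {p : p_k − p_i ≤_lex u_k − u_i}`. -/
def sector (u : Fin d → T2i) (i : Fin d) : Set (Fin d → T2) :=
  {p | ∀ k, (↑(p k - p i) + u i : T2i) ≤ u k}

/-- The covector `S_p` of `p` w.r.t. generators `v`: the bipartite graph on
`[d] ⊔ [n]` with `(i,j) ∈ S_p` iff `v^(j)_i ≠ ∞` and `p ∈ Z_i(v^(j))`. -/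
def covector (v : Fin n → Fin d → T2i) (p : Fin d → T2) : Set (Fin d × Fin n) :=
  {ij | v ij.2 ij.1 ≠ ⊤ ∧ p ∈ sector (v ij.2) ij.1}

/-- The covector cell `C_S = {p : S ⊆ S_p}`. -/
def cellC (v : Fin n → Fin d → T2i) (S : Set (Fin d × Fin n)) : Set (Fin d → T2) :=
  {p | S ⊆ covector v p}

/-- `S` is a covector w.r.t. `v`. -/
def IsCovector (v : Fin n → Fin d → T2i) (S : Set (Fin d × Fin n)) : Prop :=
  ∃ p : Fin d → T2, S = covector v p

/-- A bipartite graph on `[d] ⊔ [n]` is bounded if no node of `[d]` is isolated. -/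
def BoundedGraph (S : Set (Fin d × Fin n)) : Prop := ∀ i, ∃ j, (i, j) ∈ S

/-- No node of `[n]` is isolated. -/
def NoIsolatedGen (S : Set (Fin d × Fin n)) : Prop := ∀ j, ∃ i, (i, j) ∈ S

-- faces of covector cells
def faceC (v : Fin n → Fin d → T2i) (S : Set (Fin d × Fin n))
    (E : Set (Fin d × Fin n × Fin d)) : Set (Fin d → T2) :=
  cellC v S ∩ {p | ∀ e ∈ E, (↑(p e.2.2 - p e.1) + v e.2.1 e.1 : T2i) = v e.2.1 e.2.2}

def IsFaceC (v : Fin n → Fin d → T2i) (S : Set (Fin d × Fin n))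
    (F : Set (Fin d → T2)) : Prop :=
  ∃ E : Set (Fin d × Fin n × Fin d),
    (∀ e ∈ E, (e.1, e.2.1) ∈ S ∧ v e.2.1 e.2.2 ≠ ⊤) ∧ F = faceC v S E

def relintC (v : Fin n → Fin d → T2i) (S : Set (Fin d × Fin n)) : Set (Fin d → T2) :=
  {p | p ∈ cellC v S ∧ ∀ F, IsFaceC v S F → F ≠ cellC v S → p ∉ F}

/-- The pairing `⟨s,p⟩ = ∑ i, s i • p i` between `ℤ^d` and `(T₂)^d`. -/
def pairE (s : Fin d → ℤ) (p : Fin d → T2) : T2 := ∑ i, s i • p i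

/-- A lex-polyhedron in `(T₂)^d`. -/
def IsLexPolyE (P : Set (Fin d → T2)) : Prop :=
  ∃ (k : ℕ) (s : Fin k → Fin d → ℤ) (q : Fin k → T2),
    P = {p | ∀ i, pairE (s i) p ≤ q i}

-- rank one versions
def sector1 (u : Fin d → WithTop ℝ) (i : Fin d) : Set (Fin d → ℝ) :=
  {p | ∀ k, (↑(p k - p i) + u i : WithTop ℝ) ≤ u k}

def covector1 (v : Fin n → Fin d → WithTop ℝ) (p : Fin d → ℝ) :
    Set (Fin d × Fin n) :=
  {ij | v ij.2 ij.1 ≠ ⊤ ∧ p ∈ sector1 (v ij.2) ij.1}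

def cell1C (v : Fin n → Fin d → WithTop ℝ) (S : Set (Fin d × Fin n)) :
    Set (Fin d → ℝ) :=
  {p | S ⊆ covector1 v p}

def IsCovector1 (v : Fin n → Fin d → WithTop ℝ) (S : Set (Fin d × Fin n)) : Prop :=
  ∃ p : Fin d → ℝ, S = covector1 v p

/-- Projection `π_{u*}` onto first coordinates (sending `∞` to `∞`). -/
def projU2 (x : T2i) : WithTop ℝ := WithTop.map (fun a => (ofLex a).1) x

/-- Projection `π_{t*}` onto second coordinates (sending `∞` to `∞`). -/
def projT2 (x : T2i) : WithTop ℝ := WithTop.map (fun a => (ofLex a).2) x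

def genU (v : Fin n → Fin d → T2i) : Fin n → Fin d → WithTop ℝ :=
  fun j i => projU2 (v j i)

/-- The generators `V_T` of `K_T`. -/
def genRestrict (v : Fin n → Fin d → T2i) (T : Set (Fin d × Fin n)) :
    Fin n → Fin d → T2i :=
  fun j i => if (i, j) ∈ T then v j i else ⊤

def genTB (v : Fin n → Fin d → T2i) (T : Set (Fin d × Fin n)) :
    Fin n → Fin d → WithTop ℝ :=
  fun j i => projT2 (genRestrict v T j i)

/-- The identification `(ℝ²)^d ≅ ℝ_t^d × ℝ_u^d = ℝ^{2d}`. -/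
def embed2 (p : Fin d → T2) : (Fin d → ℝ) × (Fin d → ℝ) :=
  (fun i => (ofLex (p i)).1, fun i => (ofLex (p i)).2)

/-- The finite part of the tropical cone generated by `v`, as a subset of `(T₂)^d`. -/
def genConeFin (v : Fin n → Fin d → T2i) : Set (Fin d → T2) :=
  {p | (fun i => (↑(p i) : T2i)) ∈ genCone v}

theorem WithTop.coe_sub_add_le_iff {G : Type*} [AddCommGroup G] [LinearOrder G]
    [IsOrderedAddMonoid G] (a b c : G) (u : WithTop G) :
    ((a - b : G) : WithTop G) + c ≤ u ↔ (a : WithTop G) ≤ ((b - c : G) : WithTop G) + u := by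
  induction u with
  | top => simp
  | coe u =>
    rw [← WithTop.coe_add, ← WithTop.coe_add, WithTop.coe_le_coe, WithTop.coe_le_coe,
      show a - b + c = a - (b - c) by abel, sub_le_iff_le_add']

theorem WithTop.finset_inf_add {ι α : Type*} [LinearOrder α] [Add α]
    [AddRightMono α] (s : Finset ι) (f : ι → WithTop α) (c : WithTop α) :
    s.inf f + c = s.inf fun i => f i + c :=
  Finset.apply_inf_eq_inf_comp_of_linearOrder (· + c) (fun _ _ h => add_le_add_left h c)
    (top_add c)

theorem mem_sector_iff_le_add {u : Fin d → T2i} {i : Fin d} {b : T2} (hb : u i = b)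
    {p : Fin d → T2} : p ∈ sector u i ↔ ∀ k, (p k : T2i) ≤ ↑(p i - b) + u k := by
  simp only [sector, Set.mem_ofPred_eq, hb, WithTop.coe_sub_add_le_iff]

theorem exists_add_eq_of_tropCombN_eq_coe {v : Fin n → Fin d → T2i} {lam : Fin n → T2i}
    {i : Fin d} {x : T2} (h : tropCombN v lam i = x) : ∃ j, lam j + v j i = x := by
  rcases (Finset.univ : Finset (Fin n)).eq_empty_or_nonempty with hempty | hne
  · simp [tropCombN, hempty] at h
  · obtain ⟨j, -, hj⟩ := Finset.exists_mem_eq_inf _ hne fun j => lam j + v j i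
    exact ⟨j, hj ▸ h⟩

theorem mem_sector_of_tropCombN_eq {v : Fin n → Fin d → T2i} {lam : Fin n → T2i}
    {p : Fin d → T2} (hp : (fun i => (p i : T2i)) = tropCombN v lam) {i : Fin d} {j : Fin n}
    (hj : lam j + v j i = p i) : v j i ≠ ⊤ ∧ p ∈ sector (v j) i := by
  obtain ⟨a, b, ha, hb, hab⟩ := WithTop.add_eq_coe.mp hj
  refine ⟨hb ▸ WithTop.coe_ne_top, (mem_sector_iff_le_add hb.symm).mpr fun k => ?_⟩
  rw [← hab, add_sub_cancel_right, ha]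
  exact (congrFun hp k).trans_le (Finset.inf_le (Finset.mem_univ j))

def sectorCoeffs (f : Fin d → Fin n) (b p : Fin d → T2) : Fin n → T2i :=
  fun j => (Finset.univ.filter (f · = j)).inf fun i => ↑(p i - b i)

theorem tropCombN_sectorCoeffs {v : Fin n → Fin d → T2i} {f : Fin d → Fin n}
    {b p : Fin d → T2} (hb : ∀ i, ↑(b i) = v (f i) i) (hsec : ∀ i, p ∈ sector (v (f i)) i) :
    tropCombN v (sectorCoeffs f b p) = fun i => ↑(p i) := by
  funext i
  refine le_antisymm ?_ (Finset.le_inf fun j _ => ?_)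
  · calc tropCombN v (sectorCoeffs f b p) i
        ≤ sectorCoeffs f b p (f i) + v (f i) i := Finset.inf_le (Finset.mem_univ _)
      _ ≤ ↑(p i - b i) + ↑(b i) := by
          rw [hb]
          gcongr
          exact Finset.inf_le (by simp)
      _ = ↑(p i) := by rw [← WithTop.coe_add, sub_add_cancel]
  · rw [sectorCoeffs, WithTop.finset_inf_add]
    refine Finset.le_inf fun k hk => ?_
    obtain rfl := (Finset.mem_filter.mp hk).2
    exact (mem_sector_iff_le_add (hb k).symm).mp (hsec k) i

/-- A point `p ∈ (T₂)^d` lies in the rank two tropical cone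
generated by `v^(1), …, v^(n)` iff for every `i ∈ [d]` there is some `j ∈ [n]` with
`v^(j)_i ≠ ∞` and `p ∈ Z_i(v^(j))`. -/
theorem cone_sector_cover (d n : ℕ) (v : Fin n → Fin d → T2i) (p : Fin d → T2) :
    (fun i => (↑(p i) : T2i)) ∈ genCone v ↔
      ∀ i, ∃ j, v j i ≠ ⊤ ∧ p ∈ sector (v j) i := by
  constructor
  · rintro ⟨lam, hlam⟩ i
    obtain ⟨j, hj⟩ := exists_add_eq_of_tropCombN_eq_coe (congrFun hlam i).symm
    exact ⟨j, mem_sector_of_tropCombN_eq hlam hj⟩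
  · intro h
    choose f hfin hsec using h
    choose b hb using fun i => WithTop.ne_top_iff_exists.mp (hfin i)
    exact ⟨_, (tropCombN_sectorCoeffs hb hsec).symm⟩
end
end

section
/- Let K be the rank two tropical cone in (T₂ ∪ {∞})^d generated by V = (v^(1), …, v^(n)). For a bipartite graph T on [d] ⊔ [n], let K_T be the rank two tropical cone generated by V_T, where (v^(j)_T)_i = v^(j)_i if (i,j) ∈ T and ∞ otherwise, and write π_{u*} and π_{t*} for the coordinatewise projections (a,b) ↦ a and (a,b) ↦ b (sending ∞ to ∞), so that π_{u*}(K) and π_{t*}(K_T) are rank one tropical cones in (T ∪ {∞})^d generated by π_{u*}(V) and π_{t*}(V_T), with covector cells A_T ⊆ ℝ_t^d and B_S ⊆ ℝ_u^d which are ordinary convex polyhedra. Then, under the identification (ℝ²)^d ≅ ℝ_t^d × ℝ_u^d = ℝ^{2d}, the intersection K ∩ (T₂)^d is the finite disjoint union K ∩ (T₂)^d = ⊔_S ⊔_{T ⊇ S} ( int(A_T) + int(B_S) ), where S runs over the bounded covectors of V and, for each such S, T runs over the covectors of π_{u*}(V) containing S; each piece int(A_T) + int(B_S) equals the interior of the ordinary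 polyhedron A_T + B_S. -/
noncomputable section
open scoped Classical

variable {d n : ℕ}

/-- The summand `int(A_T) + int(B_S) ⊆ ℝ_t^d × ℝ_u^d = ℝ^{2d}`, where `A_T` is the
rank one covector cell of `π_{u*}(V)` labelled `T` and `B_S` the rank one covector
cell of `π_{t*}(V_T)` labelled `S`. -/
def conePiece (v : Fin n → Fin d → T2i) (S T : Set (Fin d × Fin n)) :
    Set ((Fin d → ℝ) × (Fin d → ℝ)) :=
  {x | x.1 ∈ intrinsicInterior ℝ (cell1C (genU v) T) ∧
       x.2 ∈ intrinsicInterior ℝ (cell1C (genTB v T) S)}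

/-- The ordinary polyhedron `A_T + B_S ⊆ ℝ^{2d}` (orthogonal Minkowski sum). -/
def coneBlock (v : Fin n → Fin d → T2i) (S T : Set (Fin d × Fin n)) :
    Set ((Fin d → ℝ) × (Fin d → ℝ)) :=
  {x | x.1 ∈ cell1C (genU v) T ∧ x.2 ∈ cell1C (genTB v T) S}

/-- The index condition: `S` is a bounded covector of `V`, and `T ⊇ S` is a covector
of `π_{u*}(V)`. -/
def coneIdx (v : Fin n → Fin d → T2i) (S T : Set (Fin d × Fin n)) : Prop :=
  IsCovector v S ∧ BoundedGraph S ∧ IsCovector1 (genU v) T ∧ S ⊆ T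


/-!
A point `p` of `T₂^d` lies in the cone iff every coordinate node of its covector `S_p` has an
edge: the coefficient of a generator is then read off any node of its column. Splitting the
lexicographic sector inequalities, the first coordinates `u` of `p` have the rank one covector
`T ⊇ S_p` for `π_{u*}(V)`; on the pairs of `T` the first coordinates are tight, so the second
coordinates `t` decide, and `S_p` is the rank one covector of `t` for `π_{t*}(V_T)`. Hence
`(u, t)` lies in exactly one product `{u : S_u = T} × {t : S_t = S}`, and this product is
`int(A_T) × int(B_S)`: the relative interior of a rank one covector cell `{t : S ⊆ S_t}` is
`{t : S_t = S}`, since the equalities along the edges of `S` hold on the whole cell, hence on its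
affine span, where the cell is then cut out by the remaining inequalities. This needs `S` to be a
covector of `π_{t*}(V_T)`; a point realising it is the second-coordinate part of a point `p`
realising `S`, plus a large multiple of the difference between the first-coordinate part of `p`
and a point realising `T`.
-/

section TropicalCovector

variable {G : Type*} [AddCommGroup G] [LinearOrder G]

def tropCovector (w : Fin n → Fin d → WithTop G) (p : Fin d → G) : Set (Fin d × Fin n) :=
  {ij | w ij.2 ij.1 ≠ ⊤ ∧ ∀ k, (↑(p k - p ij.1) + w ij.2 ij.1 : WithTop G) ≤ w ij.2 k}

theorem covector1_eq_tropCovector (w : Fin n → Fin d → WithTop ℝ) (t : Fin d → ℝ) :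
    covector1 w t = tropCovector w t := rfl

variable {w : Fin n → Fin d → WithTop G} {p : Fin d → G} {i k : Fin d} {j : Fin n}

theorem mem_tropCovector_iff : (i, j) ∈ tropCovector w p ↔
    ∃ e : G, w j i = e ∧ ∀ k (f : G), w j k = f → p k - p i + e ≤ f := by
  constructor
  · rintro ⟨hi, hle⟩
    obtain ⟨e, he⟩ := WithTop.ne_top_iff_exists.mp hi
    refine ⟨e, he.symm, fun k f hf => ?_⟩
    have := hle k
    rwa [← he, hf, ← WithTop.coe_add, WithTop.coe_le_coe] at this
  · rintro ⟨e, he, hle⟩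
    refine ⟨by simp [he], fun k => ?_⟩
    cases hk : w j k with
    | top => exact le_top
    | coe f => rw [he, ← WithTop.coe_add, WithTop.coe_le_coe]; exact hle k f hk

theorem sub_add_le_of_mem_tropCovector {e f : G} (hij : (i, j) ∈ tropCovector w p)
    (he : w j i = e) (hf : w j k = f) : p k - p i + e ≤ f := by
  obtain ⟨e', he', hle⟩ := mem_tropCovector_iff.mp hij
  exact (WithTop.coe_injective (he.symm.trans he')).symm ▸ hle k f hf

theorem mem_tropCovector_map_iff {α : Type*} {u : Fin n → Fin d → WithTop α} (φ : α → G) :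
    (i, j) ∈ tropCovector (fun j i => (u j i).map φ) p ↔
      ∃ e : α, u j i = e ∧ ∀ k (f : α), u j k = f → p k - p i + φ e ≤ φ f := by
  simp only [mem_tropCovector_iff, WithTop.map_eq_some_iff]
  constructor
  · rintro ⟨-, ⟨e, he, rfl⟩, hle⟩
    exact ⟨e, he, fun k f hf => hle k _ ⟨f, hf, rfl⟩⟩
  · rintro ⟨e, he, hle⟩
    exact ⟨φ e, ⟨e, he, rfl⟩, fun k _ ⟨f, hf, hφf⟩ => hφf ▸ hle k f hf⟩

theorem tropCovector_subset_map {α : Type*} [AddCommGroup α] [LinearOrder α]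
    {u : Fin n → Fin d → WithTop α} {q : Fin d → α} (φ : α →+o G) :
    tropCovector u q ⊆ tropCovector (fun j i => (u j i).map φ) (φ ∘ q) := by
  rintro ⟨i, j⟩ hij
  obtain ⟨e, he, hle⟩ := mem_tropCovector_iff.mp hij
  refine (mem_tropCovector_map_iff φ).mpr ⟨e, he, fun k f hf => ?_⟩
  simpa only [Function.comp_apply, map_add, map_sub] using OrderHomClass.mono φ (hle k f hf)

variable [IsOrderedAddMonoid G]

theorem mem_tropCovector_iff_of_mem (hij : (i, j) ∈ tropCovector w p) :
    (k, j) ∈ tropCovector w p ↔ w j k = ↑(p k - p i) + w j i := by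
  obtain ⟨e, he, hle⟩ := mem_tropCovector_iff.mp hij
  rw [he, ← WithTop.coe_add]
  constructor
  · intro hkj
    obtain ⟨f, hf, hle'⟩ := mem_tropCovector_iff.mp hkj
    rw [hf, WithTop.coe_inj]
    refine le_antisymm ?_ (hle k f hf)
    calc f = p i - p k + f + (p k - p i) := by abel
      _ ≤ e + (p k - p i) := by gcongr; exact hle' i e he
      _ = p k - p i + e := by abel
  · intro hk
    refine mem_tropCovector_iff.mpr ⟨_, hk, fun k' f hf => ?_⟩
    calc p k' - p k + (p k - p i + e) = p k' - p i + e := by abel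
      _ ≤ f := hle k' f hf

theorem mem_tropCovector_iff_eq_of_mem {e f : G} (hij : (i, j) ∈ tropCovector w p)
    (he : w j i = e) (hf : w j k = f) : (k, j) ∈ tropCovector w p ↔ f = p k - p i + e := by
  rw [mem_tropCovector_iff_of_mem hij, he, hf, ← WithTop.coe_add, WithTop.coe_inj]

theorem exists_mem_tropCovector (hk : w j k ≠ ⊤) : ∃ i, (i, j) ∈ tropCovector w p := by
  have : Nonempty (Fin d) := ⟨k⟩
  obtain ⟨i, -, hmin⟩ := Finset.exists_min_image Finset.univ
    (fun i => w j i + ↑(-p i)) Finset.univ_nonempty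
  have hi : w j i ≠ ⊤ := fun hi => hk (by simpa [hi] using hmin k (Finset.mem_univ k))
  obtain ⟨e, he⟩ := WithTop.ne_top_iff_exists.mp hi
  refine ⟨i, mem_tropCovector_iff.mpr ⟨e, he.symm, fun k' f hf => ?_⟩⟩
  have := hmin k' (Finset.mem_univ k')
  rw [← he, hf, ← WithTop.coe_add, ← WithTop.coe_add, WithTop.coe_le_coe] at this
  calc p k' - p i + e = e + -p i + p k' := by abel
    _ ≤ f + -p k' + p k' := by gcongr
    _ = f := by abel

open WithTop in
theorem exists_eq_inf_add_of_forall_exists_mem_tropCovector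
    (hcov : ∀ i, ∃ j, (i, j) ∈ tropCovector w p) : ∃ lam : Fin n → WithTop G,
      ∀ i, (p i : WithTop G) = Finset.univ.inf fun j => lam j + w j i := by
  -- the coefficient of column `j` is minus the minimum of `w j i - p i` over `i`
  set c : Fin n → WithTop G := fun j => Finset.univ.inf fun i => w j i - p i
  have hc_le : ∀ i j, c j ≤ w j i - p i := fun i j => Finset.inf_le (Finset.mem_univ i)
  refine ⟨fun j => -c j, fun i => le_antisymm (Finset.le_inf fun j _ => ?_) ?_⟩
  · change (p i : WithTop G) ≤ -c j + w j i
    cases hcj : c j with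
    | top => simp
    | coe m =>
      have := hc_le i j
      cases hji : w j i with
      | top => simp
      | coe e =>
        rw [hcj, hji, ← LinearOrderedAddCommGroup.coe_sub, WithTop.coe_le_coe] at this
        rw [← LinearOrderedAddCommGroup.coe_neg, ← WithTop.coe_add, WithTop.coe_le_coe]
        calc p i = -m + (m + p i) := by abel
          _ ≤ -m + e := by gcongr; exact le_sub_iff_add_le.mp this
  · obtain ⟨j, hij⟩ := hcov i
    obtain ⟨e, he, hle⟩ := mem_tropCovector_iff.mp hij
    have hcj : c j = ↑(e - p i) := by
      refine le_antisymm (by simpa [he] using hc_le i j) (Finset.le_inf fun k _ => ?_)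
      cases hk : w j k with
      | top => simp
      | coe f =>
        rw [← LinearOrderedAddCommGroup.coe_sub, WithTop.coe_le_coe]
        calc e - p i = p k - p i + e - p k := by abel
          _ ≤ f - p k := by gcongr; exact hle k f hk
    refine Finset.inf_le_of_le (Finset.mem_univ j) (le_of_eq ?_)
    change -c j + w j i = p i
    rw [hcj, he, ← LinearOrderedAddCommGroup.coe_neg, ← WithTop.coe_add, WithTop.coe_inj]
    abel

theorem exists_mem_tropCovector_of_eq_inf_add {lam : Fin n → WithTop G}
    (hlam : ∀ i, (p i : WithTop G) = Finset.univ.inf fun j => lam j + w j i) (i : Fin d) :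
    ∃ j, (i, j) ∈ tropCovector w p := by
  have : Nonempty (Fin n) := by
    by_contra h
    simpa [not_nonempty_iff.mp h] using hlam i
  obtain ⟨j, -, hj⟩ :=
    Finset.exists_mem_eq_inf Finset.univ Finset.univ_nonempty fun j => lam j + w j i
  have hpi : (p i : WithTop G) = lam j + w j i := (hlam i).trans hj
  obtain ⟨hl, he⟩ := WithTop.add_ne_top.mp (hpi ▸ WithTop.coe_ne_top)
  obtain ⟨l, hl⟩ := WithTop.ne_top_iff_exists.mp hl
  obtain ⟨e, he⟩ := WithTop.ne_top_iff_exists.mp he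
  rw [← hl, ← he, ← WithTop.coe_add, WithTop.coe_inj] at hpi
  refine ⟨j, mem_tropCovector_iff.mpr ⟨e, he.symm, fun k f hf => ?_⟩⟩
  have hk : (p k : WithTop G) ≤ lam j + w j k :=
    (hlam k).trans_le (Finset.inf_le (Finset.mem_univ j))
  rw [← hl, hf, ← WithTop.coe_add, WithTop.coe_le_coe] at hk
  calc p k - p i + e = p k - l := by rw [hpi]; abel
    _ ≤ f := sub_le_iff_le_add'.mpr hk

theorem forall_exists_mem_tropCovector_iff :
    (∀ i, ∃ j, (i, j) ∈ tropCovector w p) ↔ ∃ lam : Fin n → WithTop G,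
      ∀ i, (p i : WithTop G) = Finset.univ.inf fun j => lam j + w j i :=
  ⟨exists_eq_inf_add_of_forall_exists_mem_tropCovector,
    fun ⟨_, hlam⟩ => exists_mem_tropCovector_of_eq_inf_add hlam⟩

end TropicalCovector

open Topology in
theorem intrinsicInterior_eq_inter_of_isOpen {E : Type*} [NormedAddCommGroup E]
    [NormedSpace ℝ E] {s U : Set E} (hU : IsOpen U)
    (hspan : ∀ x ∈ affineSpan ℝ s, x ∈ U → x ∈ s) (hne : (s ∩ U).Nonempty)
    (hseg : ∀ q ∈ s ∩ U, ∀ y ∈ s, openSegment ℝ q y ⊆ s ∩ U) :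
    intrinsicInterior ℝ s = s ∩ U := by
  refine subset_antisymm ?_ fun x hx => ?_
  · rintro _ ⟨y, hy, rfl⟩
    obtain ⟨q, hq⟩ := hne
    -- the line from `q` through `y` stays in `s` a little beyond `y`
    let c : ℝ → affineSpan ℝ s := fun τ =>
      ⟨AffineMap.lineMap q (y : E) τ,
        AffineMap.lineMap_mem τ (subset_affineSpan ℝ s hq.1) y.2⟩
    have hc : Continuous c := (AffineMap.lineMap_continuous).subtype_mk _
    have hc1 : c 1 = y := Subtype.ext (AffineMap.lineMap_apply_one _ _)
    have hcs : ∀ᶠ τ in 𝓝[>] (1 : ℝ), (c τ : E) ∈ s :=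
      nhdsWithin_le_nhds (hc.tendsto' 1 y hc1 (mem_interior_iff_mem_nhds.mp hy))
    obtain ⟨τ, hτs, hτ⟩ := (hcs.and self_mem_nhdsWithin).exists
    have hτ0 : (0 : ℝ) < τ := by linarith [show (1 : ℝ) < τ from hτ]
    refine hseg q hq _ hτs ⟨1 - τ⁻¹, τ⁻¹, by simpa using inv_lt_one_of_one_lt₀ hτ,
      by positivity, by ring, ?_⟩
    simp only [c, AffineMap.lineMap_apply_module]
    match_scalars <;> field_simp; ring
  · exact ⟨⟨x, subset_affineSpan ℝ s hx.1⟩,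
      interior_maximal (t := ((↑) : affineSpan ℝ s → E) ⁻¹' U) (fun z hz => hspan _ z.2 hz)
        (hU.preimage continuous_subtype_val) hx.2, rfl⟩

section RankOneCell

theorem isClosed_setOf_mem_covector1 (w : Fin n → Fin d → WithTop ℝ) (i : Fin d) (j : Fin n) :
    IsClosed {t | (i, j) ∈ covector1 w t} := by
  rcases eq_or_ne (w j i) ⊤ with hi | hi
  · simp [covector1, hi]
  obtain ⟨e, he⟩ := WithTop.ne_top_iff_exists.mp hi
  have : {t | (i, j) ∈ covector1 w t} =
      ⋂ k, {t : Fin d → ℝ | (↑(t k - t i) + w j i : WithTop ℝ) ≤ w j k} := by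
    ext t
    simp only [covector1, sector1, Set.mem_ofPred_eq, Set.mem_iInter, hi, ne_eq,
      not_false_eq_true, true_and]
  rw [this]
  refine isClosed_iInter fun k => ?_
  cases hk : w j k with
  | top => simp
  | coe f =>
    simp only [← he, ← WithTop.coe_add, WithTop.coe_le_coe]
    exact isClosed_le (by fun_prop) continuous_const

theorem isOpen_setOf_covector1_subset (w : Fin n → Fin d → WithTop ℝ)
    (S : Set (Fin d × Fin n)) :
    IsOpen {t | covector1 w t ⊆ S} := by
  have : {t | covector1 w t ⊆ S} = ⋂ x ∈ Sᶜ, {t | x ∈ covector1 w t}ᶜ := by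
    ext t; simp [Set.subset_def, not_imp_not]
  rw [this]
  exact Sᶜ.toFinite.isOpen_biInter fun x _ =>
    (isClosed_setOf_mem_covector1 w x.1 x.2).isOpen_compl

variable {w : Fin n → Fin d → WithTop ℝ} {S : Set (Fin d × Fin n)}

theorem subset_covector1_of_mem_affineSpan {t : Fin d → ℝ}
    (ht : t ∈ affineSpan ℝ (cell1C w S)) (htS : covector1 w t ⊆ S) : S ⊆ covector1 w t := by
  obtain ⟨q, hq⟩ := (affineSpan_nonempty (k := ℝ)).mp ⟨t, ht⟩
  rintro ⟨i, j⟩ hij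
  obtain ⟨e, he⟩ := WithTop.ne_top_iff_exists.mp (hq hij).1
  obtain ⟨i', hi'⟩ := exists_mem_tropCovector (p := t) (hq hij).1
  obtain ⟨e', he'⟩ := WithTop.ne_top_iff_exists.mp hi'.1
  -- `i` and `i'` are tight against each other on the cell, hence on its affine span
  let δ : (Fin d → ℝ) →ₗ[ℝ] ℝ :=
    LinearMap.proj (R := ℝ) (φ := fun _ : Fin d => ℝ) i - LinearMap.proj i'
  have hspan : Set.EqOn δ.toAffineMap (AffineMap.const ℝ (Fin d → ℝ) (e - e'))
      (affineSpan ℝ (cell1C w S)) := by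
    refine AffineMap.eqOn_affineSpan fun s hs => ?_
    have := (mem_tropCovector_iff_eq_of_mem (hs (htS hi')) he'.symm he.symm).mp (hs hij)
    simp only [δ, LinearMap.coe_toAffineMap, LinearMap.sub_apply, LinearMap.proj_apply,
      AffineMap.const_apply]
    linarith
  have := hspan ht
  simp only [δ, LinearMap.coe_toAffineMap, LinearMap.sub_apply, LinearMap.proj_apply,
    AffineMap.const_apply] at this
  exact (mem_tropCovector_iff_eq_of_mem hi' he'.symm he.symm).mpr (by linarith)

theorem covector1_eq_inter_of_mem_openSegment {x q y : Fin d → ℝ}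
    (hx : x ∈ openSegment ℝ q y)
    (hcol : ∀ j k, w j k ≠ ⊤ → ∃ i, (i, j) ∈ covector1 w q ∩ covector1 w y) :
    covector1 w x = covector1 w q ∩ covector1 w y := by
  obtain ⟨a, b, ha, hb, hab, rfl⟩ := hx
  ext ⟨k, j⟩
  rcases eq_or_ne (w j k) ⊤ with hk | hk
  · simp [covector1, hk]
  obtain ⟨f, hf⟩ := WithTop.ne_top_iff_exists.mp hk
  obtain ⟨i, hiq, hiy⟩ := hcol j k hk
  obtain ⟨e, he⟩ := WithTop.ne_top_iff_exists.mp hiq.1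
  have hix : (i, j) ∈ covector1 w (a • q + b • y) := by
    refine mem_tropCovector_iff.mpr ⟨e, he.symm, fun k' f' hf' => ?_⟩
    have h1 := sub_add_le_of_mem_tropCovector hiq he.symm hf'
    have h2 := sub_add_le_of_mem_tropCovector hiy he.symm hf'
    simp only [Pi.add_apply, Pi.smul_apply, smul_eq_mul]
    linear_combination a * h1 + b * h2 + (f' - e) * hab
  have h1 := sub_add_le_of_mem_tropCovector hiq he.symm hf.symm
  have h2 := sub_add_le_of_mem_tropCovector hiy he.symm hf.symm
  simp only [covector1_eq_tropCovector] at hix hiq hiy ⊢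
  rw [Set.mem_inter_iff, mem_tropCovector_iff_of_mem hix, mem_tropCovector_iff_of_mem hiq,
    mem_tropCovector_iff_of_mem hiy]
  simp only [← he, ← hf, ← WithTop.coe_add, WithTop.coe_inj, Pi.add_apply, Pi.smul_apply,
    smul_eq_mul]
  -- the slack at `a • q + b • y` is a positive combination of the nonnegative slacks
  -- at `q` and `y`
  refine ⟨fun h => ?_, fun ⟨hq, hy⟩ => by
    linear_combination a * hq + b * hy - (f - e) * hab⟩
  have hsum : a * (f - (q k - q i + e)) + b * (f - (y k - y i + e)) = 0 := by
    linear_combination (f - e) * hab + h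
  have hq := mul_nonneg ha.le (sub_nonneg.2 h1)
  have hy := mul_nonneg hb.le (sub_nonneg.2 h2)
  have hq0 := (mul_eq_zero.mp (by linarith : a * (f - (q k - q i + e)) = 0)).resolve_left ha.ne'
  have hy0 := (mul_eq_zero.mp (by linarith : b * (f - (y k - y i + e)) = 0)).resolve_left hb.ne'
  constructor <;> linarith

theorem intrinsicInterior_cell1C (hS : IsCovector1 w S) :
    intrinsicInterior ℝ (cell1C w S) = {t | covector1 w t = S} := by
  have hinter : cell1C w S ∩ {t | covector1 w t ⊆ S} = {t | covector1 w t = S} :=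
    Set.ext fun t => ⟨fun h => subset_antisymm h.2 h.1, fun h => ⟨h.superset, h.subset⟩⟩
  rw [← hinter]
  refine intrinsicInterior_eq_inter_of_isOpen (isOpen_setOf_covector1_subset w S)
    (fun t ht htS => subset_covector1_of_mem_affineSpan ht htS) ?_ ?_
  · obtain ⟨t, rfl⟩ := hS
    exact ⟨t, hinter.symm ▸ rfl⟩
  · rw [hinter]
    rintro q (hq : covector1 w q = S) y (hy : S ⊆ covector1 w y) x hx
    show covector1 w x = S
    rw [covector1_eq_inter_of_mem_openSegment hx fun j k hk => ?_, hq, Set.inter_eq_left.mpr hy]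
    obtain ⟨i, hi⟩ := exists_mem_tropCovector (p := q) hk
    exact ⟨i, hi, hy (hq ▸ hi)⟩

end RankOneCell

section RankTwo

def lexFst : T2 →+o ℝ where
  toFun a := (ofLex a).1
  map_zero' := rfl
  map_add' _ _ := rfl
  monotone' _ _ h := (Prod.Lex.le_iff.mp h).elim le_of_lt fun h => h.1.le

def lexSnd : T2 →+ ℝ where
  toFun a := (ofLex a).2
  map_zero' := rfl
  map_add' _ _ := rfl

theorem le_of_lexFst_lt {a b : T2} (h : lexFst a < lexFst b) : a ≤ b :=
  Prod.Lex.le_iff.mpr (Or.inl h)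

theorem le_iff_lexSnd_le_of_lexFst_eq {a b : T2} (h : lexFst a = lexFst b) :
    a ≤ b ↔ lexSnd a ≤ lexSnd b :=
  Prod.Lex.le_iff.trans ⟨fun h' => h'.elim (fun h' => absurd h h'.ne) And.right,
    fun h' => Or.inr ⟨h, h'⟩⟩

theorem exists_mul_lexFst_add_lexSnd_neg {ι : Type*} [Finite ι] (D : ι → T2) :
    ∃ c : ℝ, ∀ x, D x < 0 → c * lexFst (D x) + lexSnd (D x) < 0 := by
  obtain ⟨M, hM⟩ := (Set.finite_range fun x => lexSnd (D x) / -lexFst (D x)).bddAbove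
  refine ⟨M + 1, fun x hx => ?_⟩
  rcases Prod.Lex.lt_iff.mp hx with h | ⟨h, h'⟩
  · have h : lexFst (D x) < 0 := h
    have := (div_le_iff₀ (neg_pos.2 h)).mp (hM ⟨x, rfl⟩)
    linarith
  · have h : lexFst (D x) = 0 := h
    have h' : lexSnd (D x) < 0 := h'
    simpa [h] using h'

variable {v : Fin n → Fin d → T2i} {S T : Set (Fin d × Fin n)}

theorem genU_apply_of_eq {i : Fin d} {j : Fin n} {e : T2} (h : v j i = e) :
    genU v j i = ↑(lexFst e) := by
  rw [genU, projU2, h, WithTop.map_coe]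
  rfl

theorem mem_covector1_genTB_iff {t : Fin d → ℝ} {i : Fin d} {j : Fin n} :
    (i, j) ∈ covector1 (genTB v T) t ↔ (i, j) ∈ T ∧ ∃ e : T2, v j i = e ∧
      ∀ k (f : T2), (k, j) ∈ T → v j k = f → t k - t i + lexSnd e ≤ lexSnd f := by
  refine (mem_tropCovector_map_iff (u := genRestrict v T) lexSnd).trans ⟨?_, ?_⟩
  · rintro ⟨e, he, hle⟩
    have hiT : (i, j) ∈ T := by by_contra h; simp [genRestrict, h] at he
    simp only [genRestrict, if_pos hiT] at he
    exact ⟨hiT, e, he, fun k f hkT hf => hle k f (by simp [genRestrict, hkT, hf])⟩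
  · rintro ⟨hiT, e, he, hle⟩
    refine ⟨e, by simp [genRestrict, hiT, he], fun k f hf => ?_⟩
    have hkT : (k, j) ∈ T := by by_contra h; simp [genRestrict, h] at hf
    simp only [genRestrict, if_pos hkT] at hf
    exact hle k f hkT hf

theorem embed2_fst (p : Fin d → T2) : (embed2 p).1 = lexFst ∘ p := rfl

theorem embed2_snd (p : Fin d → T2) : (embed2 p).2 = lexSnd ∘ p := rfl

theorem covector_subset_covector1_genU (v : Fin n → Fin d → T2i) (p : Fin d → T2) :
    covector v p ⊆ covector1 (genU v) (embed2 p).1 :=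
  tropCovector_subset_map lexFst

theorem covector_eq_covector1_genTB (v : Fin n → Fin d → T2i) (p : Fin d → T2) :
    covector v p = covector1 (genTB v (covector1 (genU v) (embed2 p).1)) (embed2 p).2 := by
  set T := covector1 (genU v) (embed2 p).1
  ext ⟨i, j⟩
  rw [mem_covector1_genTB_iff, embed2_snd]
  constructor
  · intro hij
    have hiT : (i, j) ∈ T := covector_subset_covector1_genU v p hij
    obtain ⟨e, he, hle⟩ := mem_tropCovector_iff.mp hij
    refine ⟨hiT, e, he, fun k f hkT hf => ?_⟩
    -- both `(i, j)` and `(k, j)` lie in `T`, so the first coordinates are tight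
    have hfst : lexFst (p k - p i + e) = lexFst f := by
      rw [(mem_tropCovector_iff_eq_of_mem hiT (genU_apply_of_eq he)
        (genU_apply_of_eq hf)).mp hkT, map_add, map_sub]
      rfl
    simpa using (le_iff_lexSnd_le_of_lexFst_eq hfst).mp (hle k f hf)
  · rintro ⟨hiT, e, he, hle⟩
    refine mem_tropCovector_iff.mpr ⟨e, he, fun k f hf => ?_⟩
    have hfst := sub_add_le_of_mem_tropCovector hiT (genU_apply_of_eq he) (genU_apply_of_eq hf)
    rw [embed2_fst] at hfst
    rcases hfst.lt_or_eq with hlt | heq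
    · exact le_of_lexFst_lt (by simpa using hlt)
    · have hkT := (mem_tropCovector_iff_eq_of_mem hiT (genU_apply_of_eq he)
        (genU_apply_of_eq hf)).mpr heq.symm
      rw [le_iff_lexSnd_le_of_lexFst_eq (by simpa using heq)]
      simpa using hle k f hkT hf

theorem covector1_genTB_perturb_eq {p : Fin d → T2} {u : Fin d → ℝ} {c : ℝ}
    (hST : covector v p ⊆ covector1 (genU v) u)
    (hc : ∀ {i k j} {e f : T2}, v j i = e → v j k = f → p k - p i + e - f < 0 →
      c * lexFst (p k - p i + e - f) + lexSnd (p k - p i + e - f) < 0) :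
    covector1 (genTB v (covector1 (genU v) u)) (fun i => lexSnd (p i) + c * (lexFst (p i) - u i))
      = covector v p := by
  set t : Fin d → ℝ := fun i => lexSnd (p i) + c * (lexFst (p i) - u i)
  -- on pairs of `T`, the slack at `t` is `c • lexFst + lexSnd` of the lexicographic slack at `p`
  have hslack : ∀ {i k j} {e f : T2}, (i, j) ∈ covector v p →
      (k, j) ∈ covector1 (genU v) u → v j i = e → v j k = f →
      t k - t i + lexSnd e - lexSnd f =
        c * lexFst (p k - p i + e - f) + lexSnd (p k - p i + e - f) := by
    intro i k j e f hij hkT he hf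
    have hfst := (mem_tropCovector_iff_eq_of_mem (hST hij) (genU_apply_of_eq he)
      (genU_apply_of_eq hf)).mp hkT
    simp only [map_sub, map_add, t]
    linear_combination c * hfst
  apply subset_antisymm
  · rintro ⟨k, j⟩ hkj
    obtain ⟨hkT, f, hf, hle⟩ := mem_covector1_genTB_iff.mp hkj
    obtain ⟨i, hij⟩ :=
      exists_mem_tropCovector (w := v) (p := p) (j := j) (hf ▸ WithTop.coe_ne_top)
    obtain ⟨e, he, hle'⟩ := mem_tropCovector_iff.mp hij
    by_contra hkS
    have hlt : p k - p i + e - f < 0 :=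
      (sub_nonpos.mpr (hle' k f hf)).lt_of_ne fun h0 =>
        hkS ((mem_tropCovector_iff_eq_of_mem hij he hf).mpr (sub_eq_zero.mp h0).symm)
    linarith [hc he hf hlt, hslack hij hkT he hf, hle i e (hST hij) he]
  · rintro ⟨i, j⟩ hij
    obtain ⟨e, he, hle⟩ := mem_tropCovector_iff.mp hij
    refine mem_covector1_genTB_iff.mpr ⟨hST hij, e, he, fun k f hkT hf => ?_⟩
    have hslack := hslack hij hkT he hf
    rcases (sub_nonpos.mpr (hle k f hf)).lt_or_eq with hlt | h0
    · linarith [hc he hf hlt]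
    · simp only [h0, map_zero, mul_zero, add_zero] at hslack
      linarith

theorem isCovector1_genTB (hS : IsCovector v S) (hT : IsCovector1 (genU v) T) (hST : S ⊆ T) :
    IsCovector1 (genTB v T) S := by
  obtain ⟨p, rfl⟩ := hS
  obtain ⟨u, rfl⟩ := hT
  -- the lexicographic slacks `p k - p i + v j i - v j k`, with `⊤` read as `0`
  obtain ⟨c, hc⟩ := exists_mul_lexFst_add_lexSnd_neg fun x : Fin d × Fin n × Fin d =>
    p x.2.2 - p x.1 + (v x.2.1 x.1).untopD 0 - (v x.2.1 x.2.2).untopD 0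
  refine ⟨_, (covector1_genTB_perturb_eq (c := c) hST ?_).symm⟩
  intro i k j e f he hf hlt
  simpa only [he, hf, WithTop.untopD_coe] using hc (i, j, k) (by simpa [he, hf] using hlt)

end RankTwo

theorem mem_genConeFin_iff {v : Fin n → Fin d → T2i} {p : Fin d → T2} :
    p ∈ genConeFin v ↔ BoundedGraph (covector v p) :=
  (exists_congr fun _ => funext_iff).trans forall_exists_mem_tropCovector_iff.symm

theorem conePiece_eq {v : Fin n → Fin d → T2i} {S T : Set (Fin d × Fin n)}
    (h : coneIdx v S T) :
    conePiece v S T = {x | covector1 (genU v) x.1 = T ∧ covector1 (genTB v T) x.2 = S} := by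
  obtain ⟨hS, -, hT, hST⟩ := h
  ext x
  change x.1 ∈ _ ∧ x.2 ∈ _ ↔ _
  rw [intrinsicInterior_cell1C hT, intrinsicInterior_cell1C (isCovector1_genTB hS hT hST)]
  rfl

/-- Under the identification `(ℝ²)^d ≅ ℝ_t^d × ℝ_u^d = ℝ^{2d}`, the
finite part `K ∩ (T₂)^d` of the rank two tropical cone generated by `V` is the finite
disjoint union `⊔_S ⊔_{T ⊇ S} (int(A_T) + int(B_S))` over bounded covectors `S` of
`V` and covectors `T ⊇ S` of `π_{u*}(V)`; each piece equals the interior of the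
ordinary polyhedron `A_T + B_S`. -/
theorem cone_decomposition (d n : ℕ) (v : Fin n → Fin d → T2i) :
    embed2 '' genConeFin v =
      ⋃ S : Set (Fin d × Fin n), ⋃ T : Set (Fin d × Fin n),
        ⋃ (_ : coneIdx v S T), conePiece v S T ∧
    (∀ S T S' T' : Set (Fin d × Fin n), coneIdx v S T → coneIdx v S' T' →
      (S ≠ S' ∨ T ≠ T') → Disjoint (conePiece v S T) (conePiece v S' T')) ∧
    (∀ S T : Set (Fin d × Fin n), coneIdx v S T →
      conePiece v S T = intrinsicInterior ℝ (coneBlock v S T)) := by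
  refine ⟨?_, fun S T S' T' h h' hne => ?_, fun S T _ => (intrinsicInterior_prod_eq _ _).symm⟩
  · ext x
    simp only [Set.mem_iUnion, Set.mem_image]
    constructor
    · rintro ⟨p, hp, rfl⟩
      have hidx : coneIdx v (covector v p) (covector1 (genU v) (embed2 p).1) := ⟨⟨p, rfl⟩,
        mem_genConeFin_iff.mp hp, ⟨_, rfl⟩, covector_subset_covector1_genU v p⟩
      refine ⟨_, _, hidx, ?_⟩
      rw [conePiece_eq hidx]
      exact ⟨rfl, (covector_eq_covector1_genTB v p).symm⟩
    · rintro ⟨S, T, hidx, hx⟩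
      obtain ⟨rfl, rfl⟩ := (conePiece_eq hidx).subset hx
      let p : Fin d → T2 := fun i => toLex (x.1 i, x.2 i)
      exact ⟨p, mem_genConeFin_iff.mpr (covector_eq_covector1_genTB v p ▸ hidx.2.1), rfl⟩
  · rw [conePiece_eq h, conePiece_eq h', Set.disjoint_left]
    rintro x ⟨rfl, rfl⟩ ⟨rfl, rfl⟩
    simp at hne
end
end
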